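/- arXiv:2201.07033 — 7 statements merged into one kernel-verified Lean document; each statement's English description precedes it below -/
import Mathlib

section
/- Let (g,h,ρ) be a LieAct triple over a field k and let D: g → h be a relative difference operator. Define ρ_D: g → End(h) by ρ_D(x)(u) = ρ(x)u + ⁅D x, u⁆_h. Then ρ_D is a representation of the Lie algebra g on h, i.e. ρ_D(⁅x,y⁆_g) = ρ_D(x)∘ρ_D(y) − ρ_D(y)∘ρ_D(x) as linear endomorphisms of h, for all x,y ∈ g. -/
/-!
Write `ρ_D(x) = ρ(x) + ad (D x)` in the Lie algebra `Der(h)` of derivations of `h`. For a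
derivation `δ` one has `⁅δ, ad a⁆ = ad (δ a)`, and `ad` is a Lie algebra morphism, so
`⁅ρ_D x, ρ_D y⁆ = ⁅ρ x, ρ y⁆ + ad (ρ(x) D y - ρ(y) D x + ⁅D x, D y⁆)`. Since `ρ` is a morphism and
`D` a relative difference operator, this is `ρ ⁅x, y⁆ + ad (D ⁅x, y⁆) = ρ_D ⁅x, y⁆`.
-/

/-- Given an action `ρ` of `g` on `h` and a linear map `D : g → h`, the map
`ρ_D(x)(u) = ρ(x)u + ⁅D x, u⁆`. -/
def rhoD {k : Type*} [Field k] {g h : Type*}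
    [LieRing g] [LieAlgebra k g] [LieRing h] [LieAlgebra k h]
    (ρ : g →ₗ[k] Module.End k h) (D : g →ₗ[k] h) (x : g) (u : h) : h :=
  ρ x u + ⁅D x, u⁆

namespace LieDerivation

variable {R L : Type*} [CommRing R] [LieRing L] [LieAlgebra R L]

def ofLeibniz (δ : Module.End R L) (hδ : ∀ u v : L, δ ⁅u, v⁆ = ⁅δ u, v⁆ + ⁅u, δ v⁆) :
    LieDerivation R L L where
  toLinearMap := δ
  leibniz' u v := by
    rw [hδ, ← lie_skew v (δ u)]
    abel

@[simp]
lemma ofLeibniz_apply (δ : Module.End R L) (hδ : ∀ u v : L, δ ⁅u, v⁆ = ⁅δ u, v⁆ + ⁅u, δ v⁆)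
    (u : L) : ofLeibniz δ hδ u = δ u :=
  rfl

lemma lie_add_ad_add_ad (A B : LieDerivation R L L) (a b : L) :
    ⁅A + ad R L a, B + ad R L b⁆ = ⁅A, B⁆ + ad R L (A b - B a + ⁅a, b⁆) := by
  rw [add_lie, lie_add, lie_add, lie_der_ad_eq_ad_der, ← lie_skew (ad R L a) B,
    lie_der_ad_eq_ad_der, ← LieHom.map_lie, map_add, map_sub]
  abel

end LieDerivation

open LieDerivation

/-- If `(g, h, ρ)` is a LieAct triple and `D : g → h` is a relative difference operator, then
`ρ_D(x)(u) = ρ(x)u + ⁅D x, u⁆` is a representation of the Lie algebra `g` on `h`. -/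
theorem rhoD_isRepresentation {k : Type*} [Field k] {g h : Type*}
    [LieRing g] [LieAlgebra k g] [LieRing h] [LieAlgebra k h]
    (ρ : g →ₗ[k] Module.End k h)
    (hder : ∀ (x : g) (u v : h), ρ x ⁅u, v⁆ = ⁅ρ x u, v⁆ + ⁅u, ρ x v⁆)
    (hhom : ∀ x y : g, ρ ⁅x, y⁆ = ρ x ∘ₗ ρ y - ρ y ∘ₗ ρ x)
    (D : g →ₗ[k] h)
    (hD : ∀ x y : g, D ⁅x, y⁆ = ρ x (D y) - ρ y (D x) + ⁅D x, D y⁆) :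
    ∀ (x y : g) (u : h),
      rhoD ρ D ⁅x, y⁆ u = rhoD ρ D x (rhoD ρ D y u) - rhoD ρ D y (rhoD ρ D x u) := by
  intro x y u
  let ρ' (x : g) : LieDerivation k h h := ofLeibniz (ρ x) (hder x)
  have hρD (x : g) (u : h) : rhoD ρ D x u = (ρ' x + ad k h (D x)) u := by
    simp [rhoD, ρ']
  have hρ' : ρ' ⁅x, y⁆ = ⁅ρ' x, ρ' y⁆ := by
    ext u
    simp [ρ', hhom]
  calc rhoD ρ D ⁅x, y⁆ u
      = (⁅ρ' x, ρ' y⁆ + ad k h (ρ' x (D y) - ρ' y (D x) + ⁅D x, D y⁆)) u := by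
        rw [hρD, hρ', hD]
        rfl
    _ = ⁅ρ' x + ad k h (D x), ρ' y + ad k h (D y)⁆ u := by rw [lie_add_ad_add_ad]
    _ = rhoD ρ D x (rhoD ρ D y u) - rhoD ρ D y (rhoD ρ D x u) := by
        simp only [commutator_apply, hρD]
end

section
/- Let (g,D) be a difference Lie algebra over a field k, let ω: g × g → g be an alternating bilinear map and D̂: g → g a linear map. On the product space g × g (modelling k[t]/(t²) ⊗ g via (a,b) ↔ a + t b) define the deformed bracket B((a,b),(c,d)) = (⁅a,c⁆, ⁅a,d⁆ + ⁅b,c⁆ + ω(a,c)) and the deformed operator 𝔇(a,b) = (D a, D b + D̂ a). Then B satisfies the Jacobi identity B(B(X,Y),Z) + B(B(Y,Z),X) + B(B(Z,X),Y) = 0 for all X,Y,Z ∈ g × g, and 𝔇 satisfies the difference identity 𝔇(B(X,Y)) = B(𝔇X, Y) + B(X, 𝔇Y) + B(𝔇X, 𝔇Y) for all X,Y ∈ g × g, if and only if the pair (ω,D̂) is a 2-cocycle, i.e. for all x,y,z ∈ g: (i) ⁅ω(x,y),z⁆ + ⁅ω(y,z),x⁆ + ⁅ω(z,x),y⁆ +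 ω(⁅x,y⁆,z) + ω(⁅y,z⁆,x) + ω(⁅z,x⁆,y) = 0, and (ii) ⁅D̂x, y⁆ + ⁅x, D̂y⁆ + ⁅D̂x, Dy⁆ + ⁅Dx, D̂y⁆ − D̂(⁅x,y⁆) + ω(Dx,y) + ω(x,Dy) + ω(Dx,Dy) − D(ω(x,y)) = 0. -/
/-!
Both identities can be checked coordinatewise on `g × g`. In the `t⁰`-coordinate they are the
Jacobi and difference identities of `(g, D)`. In the `t`-coordinate every term involving the
`t`-components cancels by those same identities, so the Jacobiator of `B` and the difference
defect of `𝔇` are exactly `(0, c)` with `c` the cocycle expression evaluated at the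
`t⁰`-components; taking arguments of the form `(x, 0)` recovers the cocycle conditions.
-/

section

variable {g : Type*} [LieRing g]

/-- The deformed bracket on `g × g ≅ k[t]/(t²) ⊗ g`:
`B((a,b),(c,d)) = (⁅a,c⁆, ⁅a,d⁆ + ⁅b,c⁆ + ω(a,c))`. -/
def deformedBracket (ω : g → g → g) (X Y : g × g) : g × g :=
  (⁅X.1, Y.1⁆, ⁅X.1, Y.2⁆ + ⁅X.2, Y.1⁆ + ω X.1 Y.1)

/-- The deformed operator on `g × g ≅ k[t]/(t²) ⊗ g`: `𝔇(a,b) = (D a, D b + D̂ a)`. -/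
def deformedOp (D Dh : g → g) (X : g × g) : g × g :=
  (D X.1, D X.2 + Dh X.1)

lemma lie_lie_add_lie_lie_add_lie_lie (x y z : g) :
    ⁅⁅x, y⁆, z⁆ + ⁅⁅y, z⁆, x⁆ + ⁅⁅z, x⁆, y⁆ = 0 := by
  rw [← lie_skew ⁅x, y⁆ z, ← lie_skew ⁅y, z⁆ x, ← lie_skew ⁅z, x⁆ y]
  linear_combination (norm := abel) -lie_jacobi z x y

lemma deformedBracket_jacobiator (ω : g → g → g) (X Y Z : g × g) :
    deformedBracket ω (deformedBracket ω X Y) Z + deformedBracket ω (deformedBracket ω Y Z) X +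
        deformedBracket ω (deformedBracket ω Z X) Y =
      (0, ⁅ω X.1 Y.1, Z.1⁆ + ⁅ω Y.1 Z.1, X.1⁆ + ⁅ω Z.1 X.1, Y.1⁆ +
        ω ⁅X.1, Y.1⁆ Z.1 + ω ⁅Y.1, Z.1⁆ X.1 + ω ⁅Z.1, X.1⁆ Y.1) := by
  obtain ⟨a, b⟩ := X
  obtain ⟨c, d⟩ := Y
  obtain ⟨e, f⟩ := Z
  simp only [deformedBracket, Prod.mk_add_mk, add_lie, Prod.mk.injEq]
  constructor
  · exact lie_lie_add_lie_lie_add_lie_lie a c e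
  · linear_combination (norm := abel) lie_lie_add_lie_lie_add_lie_lie a c f +
      lie_lie_add_lie_lie_add_lie_lie b c e + lie_lie_add_lie_lie_add_lie_lie a d e

lemma deformedBracket_jacobi_iff (ω : g → g → g) :
    (∀ X Y Z : g × g,
        deformedBracket ω (deformedBracket ω X Y) Z + deformedBracket ω (deformedBracket ω Y Z) X +
          deformedBracket ω (deformedBracket ω Z X) Y = 0) ↔
      ∀ x y z : g, ⁅ω x y, z⁆ + ⁅ω y z, x⁆ + ⁅ω z x, y⁆ +
        ω ⁅x, y⁆ z + ω ⁅y, z⁆ x + ω ⁅z, x⁆ y = 0 := by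
  simp only [deformedBracket_jacobiator, Prod.mk_eq_zero, true_and]
  exact ⟨fun h x y z => h (x, 0) (y, 0) (z, 0), fun h X Y Z => h X.1 Y.1 Z.1⟩

section

variable {F : Type*} [FunLike F g g] [AddHomClass F g g] (D : F)
  (hD : ∀ x y : g, D ⁅x, y⁆ = ⁅D x, y⁆ + ⁅x, D y⁆ + ⁅D x, D y⁆)
include hD

lemma deformedOp_difference_defect (Dh : g → g) (ω : g → g → g) (X Y : g × g) :
    deformedBracket ω (deformedOp D Dh X) Y + deformedBracket ω X (deformedOp D Dh Y) +
        deformedBracket ω (deformedOp D Dh X) (deformedOp D Dh Y) -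
        deformedOp D Dh (deformedBracket ω X Y) =
      (0, ⁅Dh X.1, Y.1⁆ + ⁅X.1, Dh Y.1⁆ + ⁅Dh X.1, D Y.1⁆ + ⁅D X.1, Dh Y.1⁆ - Dh ⁅X.1, Y.1⁆ +
        ω (D X.1) Y.1 + ω X.1 (D Y.1) + ω (D X.1) (D Y.1) - D (ω X.1 Y.1)) := by
  obtain ⟨a, b⟩ := X
  obtain ⟨c, d⟩ := Y
  simp only [deformedOp, deformedBracket, Prod.mk_add_mk, Prod.mk_sub_mk, map_add, add_lie,
    lie_add, Prod.mk.injEq]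
  constructor
  · rw [hD]
    abel
  · rw [hD a d, hD b c]
    abel

lemma deformedOp_difference_iff (Dh : g → g) (ω : g → g → g) :
    (∀ X Y : g × g,
        deformedOp D Dh (deformedBracket ω X Y) =
          deformedBracket ω (deformedOp D Dh X) Y + deformedBracket ω X (deformedOp D Dh Y) +
            deformedBracket ω (deformedOp D Dh X) (deformedOp D Dh Y)) ↔
      ∀ x y : g, ⁅Dh x, y⁆ + ⁅x, Dh y⁆ + ⁅Dh x, D y⁆ + ⁅D x, Dh y⁆ - Dh ⁅x, y⁆ +
        ω (D x) y + ω x (D y) + ω (D x) (D y) - D (ω x y) = 0 := by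
  simp only [eq_comm (a := deformedOp D Dh _), ← sub_eq_zero (b := deformedOp D Dh _),
    deformedOp_difference_defect D hD, Prod.mk_eq_zero, true_and]
  exact ⟨fun h x y => h (x, 0) (y, 0), fun h X Y => h X.1 Y.1⟩

end

end

theorem infinitesimal_deformation_iff_two_cocycle_general {k : Type*} [Field k] {g : Type*}
    [LieRing g] [LieAlgebra k g]
    (D : g →ₗ[k] g)
    (hD : ∀ x y : g, D ⁅x, y⁆ = ⁅D x, y⁆ + ⁅x, D y⁆ + ⁅D x, D y⁆)
    (ω : g →ₗ[k] g →ₗ[k] g)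
    (Dh : g →ₗ[k] g) :
    ((∀ X Y Z : g × g,
        deformedBracket (fun a b => ω a b) (deformedBracket (fun a b => ω a b) X Y) Z +
        deformedBracket (fun a b => ω a b) (deformedBracket (fun a b => ω a b) Y Z) X +
        deformedBracket (fun a b => ω a b) (deformedBracket (fun a b => ω a b) Z X) Y = 0) ∧
     (∀ X Y : g × g,
        deformedOp ⇑D ⇑Dh (deformedBracket (fun a b => ω a b) X Y) =
        deformedBracket (fun a b => ω a b) (deformedOp ⇑D ⇑Dh X) Y +
        deformedBracket (fun a b => ω a b) X (deformedOp ⇑D ⇑Dh Y) +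
        deformedBracket (fun a b => ω a b) (deformedOp ⇑D ⇑Dh X) (deformedOp ⇑D ⇑Dh Y))) ↔
    ((∀ x y z : g,
        ⁅ω x y, z⁆ + ⁅ω y z, x⁆ + ⁅ω z x, y⁆ +
        ω ⁅x, y⁆ z + ω ⁅y, z⁆ x + ω ⁅z, x⁆ y = 0) ∧
     (∀ x y : g,
        ⁅Dh x, y⁆ + ⁅x, Dh y⁆ + ⁅Dh x, D y⁆ + ⁅D x, Dh y⁆ - Dh ⁅x, y⁆ +
        ω (D x) y + ω x (D y) + ω (D x) (D y) - D (ω x y) = 0)) := by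
  exact and_congr (deformedBracket_jacobi_iff _) (deformedOp_difference_iff D hD _ _)

/-- For a difference Lie algebra `(g, D)`, an alternating bilinear `ω` and a linear `D̂`,
the pair `(ω, D̂)` generates an infinitesimal deformation (i.e. the deformed bracket `B`
satisfies the Jacobi identity and the deformed operator `𝔇` is a difference operator for it)
if and only if `(ω, D̂)` is a 2-cocycle. -/
theorem infinitesimal_deformation_iff_two_cocycle {k : Type*} [Field k] {g : Type*}
    [LieRing g] [LieAlgebra k g]
    (D : g →ₗ[k] g)
    (hD : ∀ x y : g, D ⁅x, y⁆ = ⁅D x, y⁆ + ⁅x, D y⁆ + ⁅D x, D y⁆)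
    (ω : g →ₗ[k] g →ₗ[k] g) (hω : ∀ x : g, ω x x = 0)
    (Dh : g →ₗ[k] g) :
    ((∀ X Y Z : g × g,
        deformedBracket (fun a b => ω a b) (deformedBracket (fun a b => ω a b) X Y) Z +
        deformedBracket (fun a b => ω a b) (deformedBracket (fun a b => ω a b) Y Z) X +
        deformedBracket (fun a b => ω a b) (deformedBracket (fun a b => ω a b) Z X) Y = 0) ∧
     (∀ X Y : g × g,
        deformedOp ⇑D ⇑Dh (deformedBracket (fun a b => ω a b) X Y) =
        deformedBracket (fun a b => ω a b) (deformedOp ⇑D ⇑Dh X) Y +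
        deformedBracket (fun a b => ω a b) X (deformedOp ⇑D ⇑Dh Y) +
        deformedBracket (fun a b => ω a b) (deformedOp ⇑D ⇑Dh X) (deformedOp ⇑D ⇑Dh Y))) ↔
    ((∀ x y z : g,
        ⁅ω x y, z⁆ + ⁅ω y z, x⁆ + ⁅ω z x, y⁆ +
        ω ⁅x, y⁆ z + ω ⁅y, z⁆ x + ω ⁅z, x⁆ y = 0) ∧
     (∀ x y : g,
        ⁅Dh x, y⁆ + ⁅x, Dh y⁆ + ⁅Dh x, D y⁆ + ⁅D x, Dh y⁆ - Dh ⁅x, y⁆ +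
        ω (D x) y + ω x (D y) + ω (D x) (D y) - D (ω x y) = 0)) :=
  infinitesimal_deformation_iff_two_cocycle_general D hD ω Dh
end

section
/- Let (g,D) be a difference Lie algebra over a field k, let ω₁, ω₂: g × g → g be alternating bilinear maps, D̂₁, D̂₂: g → g linear maps, and N: g → g a linear map. On g × g define, for i = 1,2, the deformed brackets B_i((a,b),(c,d)) = (⁅a,c⁆, ⁅a,d⁆ + ⁅b,c⁆ + ω_i(a,c)) and operators 𝔇_i(a,b) = (D a, D b + D̂_i a), and define φ(a,b) = (a, N a + b) (modelling φ_t = Id + tN). Then φ(B₁(X,Y)) = B₂(φ(X), φ(Y)) for all X,Y ∈ g × g and 𝔇₂ ∘ φ = φ ∘ 𝔇₁, if and only if for all x,y ∈ g: ω₁(x,y) − ω₂(x,y) = ⁅N x, y⁆ + ⁅x, N y⁆ − N(⁅x,y⁆) and D̂₁(x) − D̂₂(x) = D(N x) − N(D x); that is, the two infinitesimal deformations are equivalent via Id + tN if and only if the 2-cocycles (ω₁,D̂₁) and (ω₂,D̂₂) differ by the coboundary of N. -/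
section

variable {g : Type*} [LieRing g]

/-- The map `φ(a,b) = (a, N a + b)`, modelling `φ_t = Id + t N`. -/
def phiN (N : g → g) (X : g × g) : g × g :=
  (X.1, N X.1 + X.2)

end

/-! Only the `t`-component of each equation carries information. Comparing it at
`X = (a, b)`, `Y = (c, d)`, the terms in `b` and `d` occur on both sides and cancel, so each
condition holds for all `X, Y` exactly when it holds at `b = d = 0`, where it is the
coboundary equation. -/

section

variable {g : Type*} [LieRing g]

theorem phiN_deformedBracket_eq_iff (N : g → g) (ω₁ ω₂ : g → g → g) (X Y : g × g) :
    phiN N (deformedBracket ω₁ X Y) = deformedBracket ω₂ (phiN N X) (phiN N Y) ↔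
      ω₁ X.1 Y.1 - ω₂ X.1 Y.1 = ⁅N X.1, Y.1⁆ + ⁅X.1, N Y.1⁆ - N ⁅X.1, Y.1⁆ := by
  obtain ⟨a, b⟩ := X
  obtain ⟨c, d⟩ := Y
  simp only [phiN, deformedBracket, Prod.mk.injEq, true_and, lie_add, add_lie]
  constructor <;> intro h <;> linear_combination (norm := abel) h

theorem forall_phiN_deformedBracket_eq_iff (N : g → g) (ω₁ ω₂ : g → g → g) :
    (∀ X Y : g × g,
        phiN N (deformedBracket ω₁ X Y) = deformedBracket ω₂ (phiN N X) (phiN N Y)) ↔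
      ∀ x y : g, ω₁ x y - ω₂ x y = ⁅N x, y⁆ + ⁅x, N y⁆ - N ⁅x, y⁆ := by
  simp only [phiN_deformedBracket_eq_iff]
  exact ⟨fun h x y => h (x, 0) (y, 0), fun h X Y => h X.1 Y.1⟩

variable {F : Type*} [FunLike F g g] [AddHomClass F g g]

theorem deformedOp_phiN_eq_iff (D : F) (Dh₁ Dh₂ N : g → g) (X : g × g) :
    deformedOp D Dh₂ (phiN N X) = phiN N (deformedOp D Dh₁ X) ↔
      Dh₁ X.1 - Dh₂ X.1 = D (N X.1) - N (D X.1) := by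
  obtain ⟨a, b⟩ := X
  simp only [phiN, deformedOp, Prod.mk.injEq, true_and, map_add]
  constructor <;> intro h <;> linear_combination (norm := abel) -h

theorem forall_deformedOp_phiN_eq_iff (D : F) (Dh₁ Dh₂ N : g → g) :
    (∀ X : g × g, deformedOp D Dh₂ (phiN N X) = phiN N (deformedOp D Dh₁ X)) ↔
      ∀ x : g, Dh₁ x - Dh₂ x = D (N x) - N (D x) := by
  simp only [deformedOp_phiN_eq_iff]
  exact ⟨fun h x => h (x, 0), fun h X => h X.1⟩

end

theorem deformation_equivalence_iff_coboundary_general {k : Type*} [Field k] {g : Type*}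
    [LieRing g] [LieAlgebra k g]
    (D : g →ₗ[k] g)
    (ω₁ ω₂ : g →ₗ[k] g →ₗ[k] g)
    (Dh₁ Dh₂ : g →ₗ[k] g) (N : g →ₗ[k] g) :
    ((∀ X Y : g × g,
        phiN ⇑N (deformedBracket (fun a b => ω₁ a b) X Y) =
        deformedBracket (fun a b => ω₂ a b) (phiN ⇑N X) (phiN ⇑N Y)) ∧
     (∀ X : g × g, deformedOp ⇑D ⇑Dh₂ (phiN ⇑N X) = phiN ⇑N (deformedOp ⇑D ⇑Dh₁ X))) ↔
    ((∀ x y : g, ω₁ x y - ω₂ x y = ⁅N x, y⁆ + ⁅x, N y⁆ - N ⁅x, y⁆) ∧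
     (∀ x : g, Dh₁ x - Dh₂ x = D (N x) - N (D x))) :=
  and_congr (forall_phiN_deformedBracket_eq_iff _ _ _) (forall_deformedOp_phiN_eq_iff D _ _ _)

/-- Two infinitesimal deformations of a difference Lie algebra `(g, D)`, generated by
`(ω₁, D̂₁)` and `(ω₂, D̂₂)`, are equivalent via `φ_t = Id + t N` if and only if the
2-cocycles `(ω₁, D̂₁)` and `(ω₂, D̂₂)` differ by the coboundary of `N`. -/
theorem deformation_equivalence_iff_coboundary {k : Type*} [Field k] {g : Type*}
    [LieRing g] [LieAlgebra k g]
    (D : g →ₗ[k] g)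
    (hD : ∀ x y : g, D ⁅x, y⁆ = ⁅D x, y⁆ + ⁅x, D y⁆ + ⁅D x, D y⁆)
    (ω₁ ω₂ : g →ₗ[k] g →ₗ[k] g) (hω₁ : ∀ x : g, ω₁ x x = 0) (hω₂ : ∀ x : g, ω₂ x x = 0)
    (Dh₁ Dh₂ : g →ₗ[k] g) (N : g →ₗ[k] g) :
    ((∀ X Y : g × g,
        phiN ⇑N (deformedBracket (fun a b => ω₁ a b) X Y) =
        deformedBracket (fun a b => ω₂ a b) (phiN ⇑N X) (phiN ⇑N Y)) ∧
     (∀ X : g × g, deformedOp ⇑D ⇑Dh₂ (phiN ⇑N X) = phiN ⇑N (deformedOp ⇑D ⇑Dh₁ X))) ↔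
    ((∀ x y : g, ω₁ x y - ω₂ x y = ⁅N x, y⁆ + ⁅x, N y⁆ - N ⁅x, y⁆) ∧
     (∀ x : g, Dh₁ x - Dh₂ x = D (N x) - N (D x))) :=
  deformation_equivalence_iff_coboundary_general D ω₁ ω₂ Dh₁ Dh₂ N
end

section
/- Let (ĝ, D̂) and (g, D) be difference Lie algebras over a field k and let p: ĝ → g be a surjective Lie algebra homomorphism with p ∘ D̂ = D ∘ p, such that the kernel 𝔥 = ker p is abelian (⁅u,v⁆ = 0 for all u,v ∈ 𝔥) and D̂(𝔥) ⊆ 𝔥 (an abelian extension of (g,D)). Let s: g → ĝ be a linear section, p ∘ s = id. Then: (i) ⁅s(x), u⁆ ∈ 𝔥 for all x ∈ g, u ∈ 𝔥; (ii) ⁅s(⁅x,y⁆), u⁆ = ⁅s(x), ⁅s(y), u⁆⁆ − ⁅s(y), ⁅s(x), u⁆⁆ for all x,y ∈ g, u ∈ 𝔥; (iii) D̂(⁅s(x), u⁆) = ⁅s(D x), u⁆ + ⁅s(x), D̂ u⁆ + ⁅s(D x), D̂ u⁆ for all x ∈ g, u ∈ 𝔥. That is, ϱ(x)u := ⁅s(x),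 u⁆ is a representation of the difference Lie algebra (g,D) on 𝔥 with respect to K = D̂|_𝔥. -/
/-! Since the kernel of `p` is abelian, `⁅a, u⁆` for `u ∈ ker p` depends only on `p a`. As
`p ∘ s = id` and `p` respects brackets and intertwines `D̂` with `D`, the elements `s ⁅x, y⁆` and
`⁅s x, s y⁆`, as well as `D̂ (s x)` and `s (D x)`, have the same image under `p`; after this
substitution (ii) is the Jacobi identity and (iii) is the difference identity for `D̂`. -/

theorem LieHom.lie_eq_lie_of_map_eq {R L L' : Type*} [CommRing R] [LieRing L] [LieAlgebra R L]
    [LieRing L'] [LieAlgebra R L'] (p : L →ₗ⁅R⁆ L')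
    (habelian : ∀ u v : L, p u = 0 → p v = 0 → ⁅u, v⁆ = 0)
    {a b u : L} (hab : p a = p b) (hu : p u = 0) : ⁅a, u⁆ = ⁅b, u⁆ := by
  have h : ⁅a - b, u⁆ = 0 := habelian _ _ (by rw [map_sub, hab, sub_self]) hu
  rwa [sub_lie, sub_eq_zero] at h

theorem section_gives_representation_general {k : Type*} [Field k]
    {ghat : Type*} [LieRing ghat] [LieAlgebra k ghat]
    {g : Type*} [LieRing g] [LieAlgebra k g]
    (Dhat : ghat →ₗ[k] ghat)
    (hDhat : ∀ a b : ghat, Dhat ⁅a, b⁆ = ⁅Dhat a, b⁆ + ⁅a, Dhat b⁆ + ⁅Dhat a, Dhat b⁆)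
    (D : g →ₗ[k] g)
    (p : ghat →ₗ⁅k⁆ g)
    (hcomm : ∀ a : ghat, p (Dhat a) = D (p a))
    (habelian : ∀ u v : ghat, p u = 0 → p v = 0 → ⁅u, v⁆ = 0)
    (hinv : ∀ u : ghat, p u = 0 → p (Dhat u) = 0)
    (s : g →ₗ[k] ghat) (hs : ∀ x : g, p (s x) = x) :
    (∀ (x : g) (u : ghat), p u = 0 → p ⁅s x, u⁆ = 0) ∧
    (∀ (x y : g) (u : ghat), p u = 0 →
      ⁅s ⁅x, y⁆, u⁆ = ⁅s x, ⁅s y, u⁆⁆ - ⁅s y, ⁅s x, u⁆⁆) ∧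
    (∀ (x : g) (u : ghat), p u = 0 →
      Dhat ⁅s x, u⁆ = ⁅s (D x), u⁆ + ⁅s x, Dhat u⁆ + ⁅s (D x), Dhat u⁆) := by
  refine ⟨fun x u hu => ?_, fun x y u hu => ?_, fun x u hu => ?_⟩
  · rw [LieHom.map_lie, hu, lie_zero]
  · have hbracket : p (s ⁅x, y⁆) = p ⁅s x, s y⁆ := by rw [LieHom.map_lie, hs, hs, hs]
    rw [p.lie_eq_lie_of_map_eq habelian hbracket hu, lie_lie]
  · have hdiff : p (Dhat (s x)) = p (s (D x)) := by rw [hcomm, hs, hs]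
    rw [hDhat, p.lie_eq_lie_of_map_eq habelian hdiff hu,
      p.lie_eq_lie_of_map_eq habelian hdiff (hinv u hu)]

/-- For an abelian extension `p : ĝ → g` of a difference Lie algebra `(g, D)` by `(𝔥, K)`
(`𝔥 = ker p` abelian and `D̂`-invariant), and a linear section `s` of `p`, the formula
`ϱ(x)u = ⁅s(x), u⁆` defines a representation of the difference Lie algebra `(g, D)` on `𝔥`
with respect to `K = D̂|_𝔥`: (i) `⁅s(x), u⁆ ∈ 𝔥`; (ii) `ϱ` is a Lie algebra representation;
(iii) the difference compatibility holds. -/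
theorem section_gives_representation {k : Type*} [Field k]
    {ghat : Type*} [LieRing ghat] [LieAlgebra k ghat]
    {g : Type*} [LieRing g] [LieAlgebra k g]
    (Dhat : ghat →ₗ[k] ghat)
    (hDhat : ∀ a b : ghat, Dhat ⁅a, b⁆ = ⁅Dhat a, b⁆ + ⁅a, Dhat b⁆ + ⁅Dhat a, Dhat b⁆)
    (D : g →ₗ[k] g)
    (hD : ∀ x y : g, D ⁅x, y⁆ = ⁅D x, y⁆ + ⁅x, D y⁆ + ⁅D x, D y⁆)
    (p : ghat →ₗ⁅k⁆ g) (hsurj : Function.Surjective p)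
    (hcomm : ∀ a : ghat, p (Dhat a) = D (p a))
    (habelian : ∀ u v : ghat, p u = 0 → p v = 0 → ⁅u, v⁆ = 0)
    (hinv : ∀ u : ghat, p u = 0 → p (Dhat u) = 0)
    (s : g →ₗ[k] ghat) (hs : ∀ x : g, p (s x) = x) :
    (∀ (x : g) (u : ghat), p u = 0 → p ⁅s x, u⁆ = 0) ∧
    (∀ (x y : g) (u : ghat), p u = 0 →
      ⁅s ⁅x, y⁆, u⁆ = ⁅s x, ⁅s y, u⁆⁆ - ⁅s y, ⁅s x, u⁆⁆) ∧
    (∀ (x : g) (u : ghat), p u = 0 →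
      Dhat ⁅s x, u⁆ = ⁅s (D x), u⁆ + ⁅s x, Dhat u⁆ + ⁅s (D x), Dhat u⁆) :=
  section_gives_representation_general Dhat hDhat D p hcomm habelian hinv s hs
end

section
/- Let (ĝ, D̂) and (g, D) be difference Lie algebras over a field k and let p: ĝ → g be a surjective Lie algebra homomorphism with p ∘ D̂ = D ∘ p, whose kernel 𝔥 = ker p is abelian (⁅u,v⁆ = 0 for all u,v ∈ 𝔥) and satisfies D̂(𝔥) ⊆ 𝔥. Let s be a linear section of p and define ω(x,y) = ⁅s(x), s(y)⁆ − s(⁅x,y⁆) and χ(x) = D̂(s(x)) − s(D x). Then ω(x,y) ∈ 𝔥 and χ(x) ∈ 𝔥 for all x,y ∈ g, and (ω,χ) is a 2-cocycle: for all x,y,z ∈ g, (1) ⁅s(x), ω(y,z)⁆ − ⁅s(y), ω(x,z)⁆ + ⁅s(z), ω(x,y)⁆ − ω(⁅x,y⁆, z) + ω(⁅x,z⁆, y) − ω(⁅y,z⁆, x) = 0; and (2) D̂(ω(x,y)) + χ(⁅x,y⁆) = ω(D x, y) + ω(x, D y) + ω(D x, D y) + ⁅s(x), χ(y)⁆ −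 ⁅s(y), χ(x)⁆ + ⁅s(D x), χ(y)⁆ − ⁅s(D y), χ(x)⁆. -/
/-!
Both defects vanish under `p` because `p` is a Lie homomorphism intertwining `D̂` and `D` and
`s` is a section. The first cocycle identity holds for any linear map `s`: after expanding, the
terms `⁅s a, s b⁆` cancel in pairs by skew-symmetry and the rest is the Jacobi identity in `ĝ`
and (under `s`) in `g`. For the second, expanding with the difference rules for `D̂` and `D`
leaves exactly `⁅χ x, χ y⁆`, which vanishes since `𝔥` is abelian.
-/

section DifferenceOperator

variable {R : Type*} [CommRing R] {L L' : Type*} [LieRing L] [LieAlgebra R L]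
  [LieRing L'] [LieAlgebra R L']

def IsDifferenceOperator (D : L →ₗ[R] L) : Prop :=
  ∀ x y : L, D ⁅x, y⁆ = ⁅D x, y⁆ + ⁅x, D y⁆ + ⁅D x, D y⁆

/-- The bracket defect `ω` of a linear map `s`. -/
def bracketDefect (s : L →ₗ[R] L') (x y : L) : L' := ⁅s x, s y⁆ - s ⁅x, y⁆

/-- The defect `χ` of `s` in intertwining `D` and `Dhat`. -/
def differenceDefect (Dhat : L' →ₗ[R] L') (D : L →ₗ[R] L) (s : L →ₗ[R] L') (x : L) : L' :=
  Dhat (s x) - s (D x)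

theorem map_bracketDefect_eq_zero (p : L' →ₗ⁅R⁆ L) (s : L →ₗ[R] L') (hs : ∀ x, p (s x) = x)
    (x y : L) : p (bracketDefect s x y) = 0 := by
  rw [bracketDefect, map_sub, LieHom.map_lie, hs, hs, hs, sub_self]

theorem map_differenceDefect_eq_zero (p : L' →ₗ[R] L) (Dhat : L' →ₗ[R] L') (D : L →ₗ[R] L)
    (hcomm : ∀ a, p (Dhat a) = D (p a)) (s : L →ₗ[R] L') (hs : ∀ x, p (s x) = x) (x : L) :
    p (differenceDefect Dhat D s x) = 0 := by
  rw [differenceDefect, map_sub, hcomm, hs, hs, sub_self]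

theorem lie_lie_sub_lie_lie_add_lie_lie (x y z : L) :
    ⁅x, ⁅y, z⁆⁆ - ⁅y, ⁅x, z⁆⁆ + ⁅z, ⁅x, y⁆⁆ = 0 := by
  rw [← lie_lie, ← lie_skew z, add_neg_cancel]

theorem bracketDefect_cocycle (s : L →ₗ[R] L') (x y z : L) :
    ⁅s x, bracketDefect s y z⁆ - ⁅s y, bracketDefect s x z⁆ + ⁅s z, bracketDefect s x y⁆ -
      bracketDefect s ⁅x, y⁆ z + bracketDefect s ⁅x, z⁆ y - bracketDefect s ⁅y, z⁆ x = 0 := by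
  have jacobi_L' := lie_lie_sub_lie_lie_add_lie_lie (s x) (s y) (s z)
  have jacobi_L := congrArg s (lie_lie_sub_lie_lie_add_lie_lie x y z)
  rw [map_add, map_sub, map_zero] at jacobi_L
  simp only [bracketDefect, lie_sub]
  rw [← lie_skew (s ⁅x, y⁆), ← lie_skew (s ⁅x, z⁆), ← lie_skew (s ⁅y, z⁆), ← lie_skew ⁅x, y⁆,
    ← lie_skew ⁅x, z⁆, ← lie_skew ⁅y, z⁆, map_neg, map_neg, map_neg]
  linear_combination (norm := abel) jacobi_L' - jacobi_L

theorem differenceDefect_cocycle {Dhat : L' →ₗ[R] L'} {D : L →ₗ[R] L}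
    (hDhat : IsDifferenceOperator Dhat) (hD : IsDifferenceOperator D) (s : L →ₗ[R] L')
    (x y : L) :
    Dhat (bracketDefect s x y) + differenceDefect Dhat D s ⁅x, y⁆ =
      bracketDefect s (D x) y + bracketDefect s x (D y) + bracketDefect s (D x) (D y) +
        ⁅s x, differenceDefect Dhat D s y⁆ - ⁅s y, differenceDefect Dhat D s x⁆ +
        ⁅s (D x), differenceDefect Dhat D s y⁆ - ⁅s (D y), differenceDefect Dhat D s x⁆ +
        ⁅differenceDefect Dhat D s x, differenceDefect Dhat D s y⁆ := by
  simp only [bracketDefect, differenceDefect, map_sub, hDhat _ _, hD _ _, map_add, lie_sub,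
    sub_lie]
  rw [← lie_skew (s y) (Dhat (s x)), ← lie_skew (s y) (s (D x)),
    ← lie_skew (s (D y)) (Dhat (s x)), ← lie_skew (s (D y)) (s (D x))]
  abel

end DifferenceOperator

theorem section_gives_two_cocycle_general {k : Type*} [Field k]
    {ghat : Type*} [LieRing ghat] [LieAlgebra k ghat]
    {g : Type*} [LieRing g] [LieAlgebra k g]
    (Dhat : ghat →ₗ[k] ghat)
    (hDhat : ∀ a b : ghat, Dhat ⁅a, b⁆ = ⁅Dhat a, b⁆ + ⁅a, Dhat b⁆ + ⁅Dhat a, Dhat b⁆)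
    (D : g →ₗ[k] g)
    (hD : ∀ x y : g, D ⁅x, y⁆ = ⁅D x, y⁆ + ⁅x, D y⁆ + ⁅D x, D y⁆)
    (p : ghat →ₗ⁅k⁆ g)
    (hcomm : ∀ a : ghat, p (Dhat a) = D (p a))
    (habelian : ∀ u v : ghat, p u = 0 → p v = 0 → ⁅u, v⁆ = 0)
    (s : g →ₗ[k] ghat) (hs : ∀ x : g, p (s x) = x)
    (ω : g → g → ghat) (hω : ∀ x y : g, ω x y = ⁅s x, s y⁆ - s ⁅x, y⁆)
    (χ : g → ghat) (hχ : ∀ x : g, χ x = Dhat (s x) - s (D x)) :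
    (∀ x y : g, p (ω x y) = 0) ∧
    (∀ x : g, p (χ x) = 0) ∧
    (∀ x y z : g,
      ⁅s x, ω y z⁆ - ⁅s y, ω x z⁆ + ⁅s z, ω x y⁆ -
        ω ⁅x, y⁆ z + ω ⁅x, z⁆ y - ω ⁅y, z⁆ x = 0) ∧
    (∀ x y : g,
      Dhat (ω x y) + χ ⁅x, y⁆ =
        ω (D x) y + ω x (D y) + ω (D x) (D y) +
        ⁅s x, χ y⁆ - ⁅s y, χ x⁆ + ⁅s (D x), χ y⁆ - ⁅s (D y), χ x⁆) := by
  obtain rfl : ω = bracketDefect s := funext₂ hω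
  obtain rfl : χ = differenceDefect Dhat D s := funext hχ
  have hpχ := map_differenceDefect_eq_zero p.toLinearMap Dhat D hcomm s hs
  refine ⟨map_bracketDefect_eq_zero p s hs, hpχ, bracketDefect_cocycle s, fun x y => ?_⟩
  rw [differenceDefect_cocycle hDhat hD, habelian _ _ (hpχ x) (hpχ y), add_zero]

/-- For an abelian extension `p : ĝ → g` of a difference Lie algebra `(g, D)` with linear
section `s`, the maps `ω(x,y) = ⁅s(x), s(y)⁆ − s(⁅x,y⁆)` and `χ(x) = D̂(s(x)) − s(D x)` take
values in `𝔥 = ker p`, and `(ω, χ)` is a 2-cocycle of `(g, D)` with coefficients in the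
induced representation `ϱ(x)u = ⁅s(x), u⁆`, `K = D̂|_𝔥`. -/
theorem section_gives_two_cocycle {k : Type*} [Field k]
    {ghat : Type*} [LieRing ghat] [LieAlgebra k ghat]
    {g : Type*} [LieRing g] [LieAlgebra k g]
    (Dhat : ghat →ₗ[k] ghat)
    (hDhat : ∀ a b : ghat, Dhat ⁅a, b⁆ = ⁅Dhat a, b⁆ + ⁅a, Dhat b⁆ + ⁅Dhat a, Dhat b⁆)
    (D : g →ₗ[k] g)
    (hD : ∀ x y : g, D ⁅x, y⁆ = ⁅D x, y⁆ + ⁅x, D y⁆ + ⁅D x, D y⁆)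
    (p : ghat →ₗ⁅k⁆ g) (hsurj : Function.Surjective p)
    (hcomm : ∀ a : ghat, p (Dhat a) = D (p a))
    (habelian : ∀ u v : ghat, p u = 0 → p v = 0 → ⁅u, v⁆ = 0)
    (hinv : ∀ u : ghat, p u = 0 → p (Dhat u) = 0)
    (s : g →ₗ[k] ghat) (hs : ∀ x : g, p (s x) = x)
    (ω : g → g → ghat) (hω : ∀ x y : g, ω x y = ⁅s x, s y⁆ - s ⁅x, y⁆)
    (χ : g → ghat) (hχ : ∀ x : g, χ x = Dhat (s x) - s (D x)) :
    (∀ x y : g, p (ω x y) = 0) ∧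
    (∀ x : g, p (χ x) = 0) ∧
    (∀ x y z : g,
      ⁅s x, ω y z⁆ - ⁅s y, ω x z⁆ + ⁅s z, ω x y⁆ -
        ω ⁅x, y⁆ z + ω ⁅x, z⁆ y - ω ⁅y, z⁆ x = 0) ∧
    (∀ x y : g,
      Dhat (ω x y) + χ ⁅x, y⁆ =
        ω (D x) y + ω x (D y) + ω (D x) (D y) +
        ⁅s x, χ y⁆ - ⁅s y, χ x⁆ + ⁅s (D x), χ y⁆ - ⁅s (D y), χ x⁆) :=
  section_gives_two_cocycle_general Dhat hDhat D hD p hcomm habelian s hs ω hω χ hχ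
end

section
/- Let (ĝ, D̂) and (g, D) be difference Lie algebras over a field k and let p: ĝ → g be a surjective Lie algebra homomorphism with p ∘ D̂ = D ∘ p, whose kernel 𝔥 = ker p is abelian (⁅u,v⁆ = 0 for all u,v ∈ 𝔥) and satisfies D̂(𝔥) ⊆ 𝔥. Let s and s' be two linear sections of p, with associated 2-cocycles ω(x,y) = ⁅s(x), s(y)⁆ − s(⁅x,y⁆), χ(x) = D̂(s(x)) − s(D x) and ω'(x,y) = ⁅s'(x), s'(y)⁆ − s'(⁅x,y⁆), χ'(x) = D̂(s'(x)) − s'(D x). Set N = s' − s (so N takes values in 𝔥). Then for all x,y ∈ g: ω'(x,y) − ω(x,y) = ⁅s(x), N(y)⁆ − ⁅s(y), N(x)⁆ − N(⁅x,y⁆) and χ'(x) − χ(x) = D̂(N(x)) − N(D x); i.e. the two cocycles differ by the coboundary of N, so they define the same cohomology class. -/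
theorem add_lie_add_eq {L : Type*} [LieRing L] (a b u v : L) :
    ⁅a + u, b + v⁆ = ⁅a, b⁆ + (⁅a, v⁆ - ⁅b, u⁆) + ⁅u, v⁆ := by
  rw [add_lie, lie_add, lie_add, ← lie_skew b u]
  abel

theorem cocycles_of_sections_differ_by_coboundary_general {k : Type*} [Field k]
    {ghat : Type*} [LieRing ghat] [LieAlgebra k ghat]
    {g : Type*} [LieRing g] [LieAlgebra k g]
    (Dhat : ghat →ₗ[k] ghat)
    (D : g →ₗ[k] g)
    (p : ghat →ₗ⁅k⁆ g)
    (habelian : ∀ u v : ghat, p u = 0 → p v = 0 → ⁅u, v⁆ = 0)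
    (s s' : g →ₗ[k] ghat) (hs : ∀ x : g, p (s x) = x) (hs' : ∀ x : g, p (s' x) = x)
    (ω : g → g → ghat) (hω : ∀ x y : g, ω x y = ⁅s x, s y⁆ - s ⁅x, y⁆)
    (χ : g → ghat) (hχ : ∀ x : g, χ x = Dhat (s x) - s (D x))
    (ω' : g → g → ghat) (hω' : ∀ x y : g, ω' x y = ⁅s' x, s' y⁆ - s' ⁅x, y⁆)
    (χ' : g → ghat) (hχ' : ∀ x : g, χ' x = Dhat (s' x) - s' (D x))
    (N : g → ghat) (hN : ∀ x : g, N x = s' x - s x) :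
    (∀ x : g, p (N x) = 0) ∧
    (∀ x y : g, ω' x y - ω x y = ⁅s x, N y⁆ - ⁅s y, N x⁆ - N ⁅x, y⁆) ∧
    (∀ x : g, χ' x - χ x = Dhat (N x) - N (D x)) := by
  have hpN : ∀ x, p (N x) = 0 := fun x => by rw [hN, map_sub, hs, hs', sub_self]
  have hs'_eq : ∀ x, s' x = s x + N x := fun x => by rw [hN, add_sub_cancel]
  refine ⟨hpN, fun x y => ?_, fun x => ?_⟩
  · rw [hω, hω', hs'_eq x, hs'_eq y, hs'_eq ⁅x, y⁆, add_lie_add_eq,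
      habelian _ _ (hpN x) (hpN y), add_zero]
    abel
  · rw [hχ, hχ', hN, hN, map_sub]
    abel

/-- For an abelian extension `p : ĝ → g` of a difference Lie algebra `(g, D)`, the 2-cocycles
`(ω, χ)` and `(ω', χ')` associated to two linear sections `s` and `s'` differ by the
coboundary of `N = s' − s`, hence define the same cohomology class. -/
theorem cocycles_of_sections_differ_by_coboundary {k : Type*} [Field k]
    {ghat : Type*} [LieRing ghat] [LieAlgebra k ghat]
    {g : Type*} [LieRing g] [LieAlgebra k g]
    (Dhat : ghat →ₗ[k] ghat)
    (hDhat : ∀ a b : ghat, Dhat ⁅a, b⁆ = ⁅Dhat a, b⁆ + ⁅a, Dhat b⁆ + ⁅Dhat a, Dhat b⁆)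
    (D : g →ₗ[k] g)
    (hD : ∀ x y : g, D ⁅x, y⁆ = ⁅D x, y⁆ + ⁅x, D y⁆ + ⁅D x, D y⁆)
    (p : ghat →ₗ⁅k⁆ g) (hsurj : Function.Surjective p)
    (hcomm : ∀ a : ghat, p (Dhat a) = D (p a))
    (habelian : ∀ u v : ghat, p u = 0 → p v = 0 → ⁅u, v⁆ = 0)
    (hinv : ∀ u : ghat, p u = 0 → p (Dhat u) = 0)
    (s s' : g →ₗ[k] ghat) (hs : ∀ x : g, p (s x) = x) (hs' : ∀ x : g, p (s' x) = x)
    (ω : g → g → ghat) (hω : ∀ x y : g, ω x y = ⁅s x, s y⁆ - s ⁅x, y⁆)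
    (χ : g → ghat) (hχ : ∀ x : g, χ x = Dhat (s x) - s (D x))
    (ω' : g → g → ghat) (hω' : ∀ x y : g, ω' x y = ⁅s' x, s' y⁆ - s' ⁅x, y⁆)
    (χ' : g → ghat) (hχ' : ∀ x : g, χ' x = Dhat (s' x) - s' (D x))
    (N : g → ghat) (hN : ∀ x : g, N x = s' x - s x) :
    (∀ x : g, p (N x) = 0) ∧
    (∀ x y : g, ω' x y - ω x y = ⁅s x, N y⁆ - ⁅s y, N x⁆ - N ⁅x, y⁆) ∧
    (∀ x : g, χ' x - χ x = Dhat (N x) - N (D x)) :=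
  cocycles_of_sections_differ_by_coboundary_general Dhat D p habelian s s' hs hs' ω hω χ hχ ω' hω'
    χ' hχ' N hN
end

section
/- Let (g,D) be a difference Lie algebra over a field k, (V,ϱ,K) a representation of (g,D), and let (ω,χ) and (ω',χ') be two pairs with ω, ω': g × g → V alternating bilinear and χ, χ': g → V linear. Suppose they are cohomologous, i.e. there is a linear map N: g → V such that for all x,y ∈ g: ω(x,y) − ω'(x,y) = ϱ(x)N(y) − ϱ(y)N(x) − N(⁅x,y⁆) and χ(x) − χ'(x) = K(N(x)) − N(D x). Define on g × V the brackets B_ω((x,u),(y,v)) = (⁅x,y⁆, ϱ(x)v − ϱ(y)u + ω(x,y)) and B_{ω'} analogously, the maps D_χ(x,u) = (D x, K u + χ(x)) and D_{χ'} analogously, and κ: g × V → g × V by κ(x,u) = (x, N(x) + u). Then κ is a linear bijection satisfying κ(B_ω(X,Y)) = B_{ω'}(κ(X), κ(Y)) for all X,Y ∈ g × V and D_{χ'} ∘ κ = κ ∘ D_χ; i.e. κ is an isomorphism of the corresponding abelian extensions of difference Lie algebras. -/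
section

variable {k : Type*} [Field k] {g : Type*} [LieRing g] [LieAlgebra k g]
  {V : Type*} [AddCommGroup V] [Module k V]

/-- The bracket on `g × V` twisted by a 2-cochain `ω`:
`B_ω((x,u),(y,v)) = (⁅x,y⁆, ϱ(x)v − ϱ(y)u + ω(x,y))`. -/
def extBracket (ϱ : g →ₗ[k] Module.End k V) (ω : g → g → V) (X Y : g × V) : g × V :=
  (⁅X.1, Y.1⁆, ϱ X.1 Y.2 - ϱ Y.1 X.2 + ω X.1 Y.1)

/-- The operator on `g × V` twisted by a 1-cochain `χ`: `D_χ(x,u) = (D x, K u + χ(x))`. -/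
def extOp (D : g →ₗ[k] g) (K : V →ₗ[k] V) (χ : g → V) (X : g × V) : g × V :=
  (D X.1, K X.2 + χ X.1)

/-- The map `κ(x,u) = (x, N(x) + u)` on `g × V`. -/
def extIso (N : g → V) (X : g × V) : g × V :=
  (X.1, N X.1 + X.2)

end

/-! `κ` is the shear of `g × V` by `N`, hence a linear automorphism (`LinearEquiv.skewProd`).
Its compatibility with the twisted brackets and operators only involves second components, where
it is exactly the two cohomology relations rearranged. -/

section

variable {k : Type*} [Field k] {g : Type*} [LieRing g] [LieAlgebra k g]
  {V : Type*} [AddCommGroup V] [Module k V]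

def extIsoLinearEquiv (N : g →ₗ[k] V) : (g × V) ≃ₗ[k] (g × V) :=
  (LinearEquiv.refl k g).skewProd (LinearEquiv.refl k V) N

theorem coe_extIsoLinearEquiv (N : g →ₗ[k] V) : ⇑(extIsoLinearEquiv N) = extIso ⇑N := by
  ext X <;> simp [extIsoLinearEquiv, extIso, add_comm]

theorem extIso_extBracket (ϱ : g →ₗ[k] Module.End k V) {ω ω' : g → g → V} {N : g →ₗ[k] V}
    (h : ∀ x y, ω x y - ω' x y = ϱ x (N y) - ϱ y (N x) - N ⁅x, y⁆) (X Y : g × V) :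
    extIso N (extBracket ϱ ω X Y) = extBracket ϱ ω' (extIso N X) (extIso N Y) := by
  have hN : N ⁅X.1, Y.1⁆ = ϱ X.1 (N Y.1) - ϱ Y.1 (N X.1) - (ω X.1 Y.1 - ω' X.1 Y.1) := by
    rw [h]; abel
  simp only [extIso, extBracket, hN, map_add, Prod.mk.injEq, true_and]
  abel

theorem extOp_extIso (D : g →ₗ[k] g) (K : V →ₗ[k] V) {χ χ' : g → V} {N : g →ₗ[k] V}
    (h : ∀ x, χ x - χ' x = K (N x) - N (D x)) (X : g × V) :
    extOp D K χ' (extIso N X) = extIso N (extOp D K χ X) := by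
  have hχ' : χ' X.1 = χ X.1 - (K (N X.1) - N (D X.1)) := by
    rw [← h]; abel
  simp only [extIso, extOp, hχ', map_add, Prod.mk.injEq, true_and]
  abel

end

theorem cohomologous_cocycles_isomorphic_extensions_general {k : Type*} [Field k] {g : Type*}
    [LieRing g] [LieAlgebra k g] {V : Type*} [AddCommGroup V] [Module k V]
    (D : g →ₗ[k] g)
    (ϱ : g →ₗ[k] Module.End k V)
    (K : V →ₗ[k] V)
    (ω ω' : g →ₗ[k] g →ₗ[k] V)
    (χ χ' : g →ₗ[k] V) (N : g →ₗ[k] V)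
    (hcohom1 : ∀ x y : g, ω x y - ω' x y = ϱ x (N y) - ϱ y (N x) - N ⁅x, y⁆)
    (hcohom2 : ∀ x : g, χ x - χ' x = K (N x) - N (D x)) :
    Function.Bijective (extIso (V := V) ⇑N) ∧
    (∀ (c : k) (X Y : g × V), extIso ⇑N (c • X + Y) = c • extIso ⇑N X + extIso ⇑N Y) ∧
    (∀ X Y : g × V,
      extIso ⇑N (extBracket ϱ (fun a b => ω a b) X Y) =
        extBracket ϱ (fun a b => ω' a b) (extIso ⇑N X) (extIso ⇑N Y)) ∧
    (∀ X : g × V, extOp D K ⇑χ' (extIso ⇑N X) = extIso ⇑N (extOp D K ⇑χ X)) := by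
  refine ⟨?_, fun c X Y => ?_, extIso_extBracket ϱ hcohom1, extOp_extIso D K hcohom2⟩
  · rw [← coe_extIsoLinearEquiv]
    exact (extIsoLinearEquiv N).bijective
  · rw [← coe_extIsoLinearEquiv, map_add, map_smul]

/-- If two pairs `(ω, χ)` and `(ω', χ')` are cohomologous via `N`, then
`κ(x,u) = (x, N(x) + u)` is a linear bijection intertwining the brackets `B_ω`, `B_{ω'}`
and the operators `D_χ`, `D_{χ'}`; i.e. `κ` is an isomorphism of the corresponding abelian
extensions of difference Lie algebras. -/
theorem cohomologous_cocycles_isomorphic_extensions {k : Type*} [Field k] {g : Type*}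
    [LieRing g] [LieAlgebra k g] {V : Type*} [AddCommGroup V] [Module k V]
    (D : g →ₗ[k] g)
    (hD : ∀ x y : g, D ⁅x, y⁆ = ⁅D x, y⁆ + ⁅x, D y⁆ + ⁅D x, D y⁆)
    (ϱ : g →ₗ[k] Module.End k V)
    (hrep : ∀ x y : g, ϱ ⁅x, y⁆ = ϱ x ∘ₗ ϱ y - ϱ y ∘ₗ ϱ x)
    (K : V →ₗ[k] V)
    (hK : ∀ (x : g) (u : V), K (ϱ x u) = ϱ (D x) u + ϱ x (K u) + ϱ (D x) (K u))
    (ω ω' : g →ₗ[k] g →ₗ[k] V) (hω : ∀ x : g, ω x x = 0) (hω' : ∀ x : g, ω' x x = 0)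
    (χ χ' : g →ₗ[k] V) (N : g →ₗ[k] V)
    (hcohom1 : ∀ x y : g, ω x y - ω' x y = ϱ x (N y) - ϱ y (N x) - N ⁅x, y⁆)
    (hcohom2 : ∀ x : g, χ x - χ' x = K (N x) - N (D x)) :
    Function.Bijective (extIso (V := V) ⇑N) ∧
    (∀ (c : k) (X Y : g × V), extIso ⇑N (c • X + Y) = c • extIso ⇑N X + extIso ⇑N Y) ∧
    (∀ X Y : g × V,
      extIso ⇑N (extBracket ϱ (fun a b => ω a b) X Y) =
        extBracket ϱ (fun a b => ω' a b) (extIso ⇑N X) (extIso ⇑N Y)) ∧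
    (∀ X : g × V, extOp D K ⇑χ' (extIso ⇑N X) = extIso ⇑N (extOp D K ⇑χ X)) :=
  cohomologous_cocycles_isomorphic_extensions_general D ϱ K ω ω' χ χ' N hcohom1 hcohom2
end
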